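/- arXiv:1710.00371 — 5 statements merged into one kernel-verified Lean document; each statement's English description precedes it below -/
import Mathlib

section
/- Let Q be a quiver with vertex set Q₀ and arrow set Q₁, and let N be a positive integer. If Q has no oriented cycles (i.e. there is no path of positive length in Q from a vertex to itself), then the twisted quiver Q(Q′) also has no oriented cycles. -/
universe u v

/-- The arrows of the twisted quiver `Q(Q′)`: vertices are `v_{ik}` (encoded `Sum.inl (i,k)`)
and `w_{ik}` (encoded `Sum.inr (i,k)`) for `i` a vertex of `Q` and `k ∈ {1,…,N}`.
Arrows are `φ_{ikl} : v_{ik} → w_{il}` for all `i, k, l`, and for every arrow `α : i → j` of `Q`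
and every `k`, arrows `α_k^left : v_{ik} → v_{jk}` and `α_k^right : w_{ik} → w_{jk}`. -/
inductive TwistedHom (Q₀ : Type u) [Quiver.{v} Q₀] (N : ℕ) :
    (Q₀ × Fin N) ⊕ (Q₀ × Fin N) → (Q₀ × Fin N) ⊕ (Q₀ × Fin N) → Type (max u v)
  | phi (i : Q₀) (k l : Fin N) : TwistedHom Q₀ N (Sum.inl (i, k)) (Sum.inr (i, l))
  | left {i j : Q₀} (α : i ⟶ j) (k : Fin N) :
      TwistedHom Q₀ N (Sum.inl (i, k)) (Sum.inl (j, k))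
  | right {i j : Q₀} (α : i ⟶ j) (k : Fin N) :
      TwistedHom Q₀ N (Sum.inr (i, k)) (Sum.inr (j, k))

def twistedQuiver (Q₀ : Type u) [Quiver.{v} Q₀] (N : ℕ) :
    Quiver ((Q₀ × Fin N) ⊕ (Q₀ × Fin N)) :=
  ⟨TwistedHom Q₀ N⟩

/-!
Project the twisted quiver onto `Q` by forgetting the index `k` and the side (`v` or `w`).
Every arrow either projects to an arrow of `Q` without changing the side, or is some `φ`,
which stays over the same vertex of `Q` but moves from the `v`-side to the `w`-side.
Since no path can return from the `w`-side, a cycle uses no `φ` and projects to a cycle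
of `Q` of the same length.
-/

namespace Quiver

variable {V : Type*} [Quiver V] {Q : Type*} [Quiver Q] (F : V → Q) (s : V → ℕ)

def IsLevelledOver : Prop :=
  ∀ ⦃x y : V⦄, (x ⟶ y) → (s x ≤ s y ∧ Nonempty (F x ⟶ F y)) ∨ (s x < s y ∧ F x = F y)

variable {F s}

theorem IsLevelledOver.exists_path_length_add_le (hF : IsLevelledOver F s) {x y : V}
    (p : Path x y) : ∃ q : Path (F x) (F y), p.length + s x ≤ q.length + s y := by
  induction p with
  | nil => exact ⟨.nil, le_rfl⟩
  | @cons y z p e ih =>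
    obtain ⟨q, hq⟩ := ih
    rcases hF e with ⟨hs, ⟨a⟩⟩ | ⟨hs, hFyz⟩
    · exact ⟨q.cons a, by simp only [Path.length_cons]; omega⟩
    · rw [← hFyz]
      exact ⟨q, by simp only [Path.length_cons]; omega⟩

theorem IsLevelledOver.length_eq_zero_of_cycle (hF : IsLevelledOver F s)
    (hQ : ∀ (i : Q) (q : Path i i), q.length = 0) {x : V} (p : Path x x) : p.length = 0 := by
  obtain ⟨q, hq⟩ := hF.exists_path_length_add_le p
  have := hQ _ q
  omega

end Quiver

theorem twistedQuiver_isLevelledOver (Q₀ : Type u) [Quiver.{v} Q₀] (N : ℕ) :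
    @Quiver.IsLevelledOver _ (twistedQuiver Q₀ N) _ _
      (Sum.elim Prod.fst Prod.fst) (Sum.elim (fun _ => 0) (fun _ => 1)) := by
  intro x y e
  change TwistedHom Q₀ N x y at e
  cases e with
  | phi => exact .inr ⟨Nat.zero_lt_one, rfl⟩
  | left α => exact .inl ⟨le_rfl, ⟨α⟩⟩
  | right α => exact .inl ⟨le_rfl, ⟨α⟩⟩

theorem twistedQuiver_no_oriented_cycles_general (Q₀ : Type u) [Quiver.{v} Q₀] (N : ℕ)
    (hQ : ∀ (i : Q₀) (p : Quiver.Path i i), p.length = 0) :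
    ∀ (x : (Q₀ × Fin N) ⊕ (Q₀ × Fin N))
      (p : @Quiver.Path _ (twistedQuiver Q₀ N) x x),
      @Quiver.Path.length _ (twistedQuiver Q₀ N) x x p = 0 := by
  let := twistedQuiver Q₀ N
  exact fun _ p => (twistedQuiver_isLevelledOver Q₀ N).length_eq_zero_of_cycle hQ p

/-- If the quiver `Q` has no oriented cycles (no path of positive length from a vertex to
itself), then the twisted quiver `Q(Q′)` has no oriented cycles either. -/
theorem twistedQuiver_no_oriented_cycles (Q₀ : Type u) [Quiver.{v} Q₀] (N : ℕ) (hN : 0 < N)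
    (hQ : ∀ (i : Q₀) (p : Quiver.Path i i), p.length = 0) :
    ∀ (x : (Q₀ × Fin N) ⊕ (Q₀ × Fin N))
      (p : @Quiver.Path _ (twistedQuiver Q₀ N) x x),
      @Quiver.Path.length _ (twistedQuiver Q₀ N) x x p = 0 :=
  twistedQuiver_no_oriented_cycles_general Q₀ N hQ
end

section
/- Consider a datum of twisted-quiver representation type over a field k (vector spaces V_{ik}, W_{il}, H_{kl}, maps φ_{ikl}, A_{αk}, B_{αk} satisfying the relations B_{αl} ∘ φ_{ikl} = φ_{jkl} ∘ (A_{αk} ⊗ id)), and let σ ∈ ℝ_{≥0}^{Q₀×{1,…,N}}. Then for every subrepresentation M′ of the datum there exists a tight subrepresentation M″ with M′ ⪯ M″. -/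
open TensorProduct Module

/-- A datum of twisted-quiver representation type over a field `k`: finite-dimensional
vector spaces `V i a`, `W i a` (for vertices `i` of `Q` and `a ∈ {1,…,N}`), labels `H a b`,
linear maps `φ_{iab} : V i a ⊗ H a b → W i b`, and for every arrow `α : i ⟶ j` of `Q` linear
maps `A α a : V i a → V j a` and `B α a : W i a → W j a`, satisfying the relations
`B α b ∘ φ_{iab} = φ_{jab} ∘ (A α a ⊗ id)`. -/
structure TwistedDatum (k : Type) [Field k] (Q₀ : Type) [Quiver.{1} Q₀] (N : ℕ) where
  V : Q₀ → Fin N → ModuleCat.{0} k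
  W : Q₀ → Fin N → ModuleCat.{0} k
  H : Fin N → Fin N → ModuleCat.{0} k
  fdV : ∀ i a, FiniteDimensional k (V i a)
  fdW : ∀ i a, FiniteDimensional k (W i a)
  fdH : ∀ a b, FiniteDimensional k (H a b)
  phi : ∀ (i : Q₀) (a b : Fin N), TensorProduct k (V i a) (H a b) →ₗ[k] W i b
  A : ∀ {i j : Q₀}, (i ⟶ j) → ∀ a : Fin N, V i a →ₗ[k] V j a
  B : ∀ {i j : Q₀}, (i ⟶ j) → ∀ a : Fin N, W i a →ₗ[k] W j a
  rel : ∀ {i j : Q₀} (α : i ⟶ j) (a b : Fin N),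
    (B α b).comp (phi i a b)
      = (phi j a b).comp (TensorProduct.map (A α a) (LinearMap.id : H a b →ₗ[k] H a b))

variable {k : Type} [Field k] {Q₀ : Type} [Quiver.{1} Q₀] {N : ℕ}

/-- A subrepresentation of a twisted datum: families of subspaces `V' i a ⊆ V i a` and
`W' i a ⊆ W i a` respected by all the structure maps. -/
structure TwistedSubrep (D : TwistedDatum k Q₀ N) where
  V' : ∀ i a, Submodule k (D.V i a)
  W' : ∀ i a, Submodule k (D.W i a)
  phi_mem : ∀ (i : Q₀) (a b : Fin N), ∀ v ∈ V' i a, ∀ h : D.H a b,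
    D.phi i a b (v ⊗ₜ[k] h) ∈ W' i b
  A_mem : ∀ {i j : Q₀} (α : i ⟶ j) (a : Fin N), ∀ v ∈ V' i a, D.A α a v ∈ V' j a
  B_mem : ∀ {i j : Q₀} (α : i ⟶ j) (a : Fin N), ∀ w ∈ W' i a, D.B α a w ∈ W' j a

/-- A subrepresentation is degenerate (w.r.t. `σ`) if all its `V'`-components vanish and its
`W'`-components vanish at all indices where `σ` is nonzero. -/
def TwistedSubrep.Degenerate {D : TwistedDatum k Q₀ N} (S : TwistedSubrep D)
    (σ : Q₀ → Fin N → ℝ) : Prop :=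
  (∀ i a, S.V' i a = ⊥) ∧ (∀ i a, σ i a ≠ 0 → S.W' i a = ⊥)

/-- Generic injectivity: for every nonzero `v ∈ V i a` and all `b` there is `h ∈ H a b` with
`φ_{iab}(v ⊗ h) ≠ 0` (abstraction of global generation of `L_a^{-n} ⊗ L_b^m`). -/
def TwistedDatum.GenInjective (D : TwistedDatum k Q₀ N) : Prop :=
  ∀ (i : Q₀) (a b : Fin N) (v : D.V i a), v ≠ 0 → ∃ h : D.H a b, D.phi i a b (v ⊗ₜ[k] h) ≠ 0

/-- `S` is subordinate to `T` (`S ⪯ T`) if `S.V' ⊆ T.V'` and `T.W' ⊆ S.W'` everywhere. -/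
def TwistedSubrep.Subord {D : TwistedDatum k Q₀ N} (S T : TwistedSubrep D) : Prop :=
  (∀ i a, S.V' i a ≤ T.V' i a) ∧ (∀ i a, T.W' i a ≤ S.W' i a)

/-- `T` is tight (w.r.t. `σ`) if any subrepresentation it is subordinate to agrees with it at
all indices where `σ` is nonzero. -/
def TwistedSubrep.Tight {D : TwistedDatum k Q₀ N} (T : TwistedSubrep D)
    (σ : Q₀ → Fin N → ℝ) : Prop :=
  ∀ U : TwistedSubrep D, T.Subord U →
    ∀ i a, σ i a ≠ 0 → T.V' i a = U.V' i a ∧ T.W' i a = U.W' i a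

/-- Every subrepresentation of a twisted datum is subordinate to a tight one. -/
theorem exists_tight_subordinate [Fintype Q₀] [∀ i j : Q₀, Fintype (i ⟶ j)]
    (D : TwistedDatum k Q₀ N) (σ : Q₀ → Fin N → ℝ) (hσ : ∀ i a, 0 ≤ σ i a)
    (S : TwistedSubrep D) :
    ∃ T : TwistedSubrep D, S.Subord T ∧ T.Tight σ := by
  classical
  -- measure of a subrepresentation
  let m : TwistedSubrep D → ℕ := fun T => ∑ i : Q₀, ∑ a : Fin N,
    (Module.finrank k (T.V' i a) +
      (Module.finrank k (D.W i a) - Module.finrank k (T.W' i a)))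
  have hmono : ∀ T U : TwistedSubrep D, T.Subord U → m T ≤ m U := by
    intro T U h
    refine Finset.sum_le_sum fun i _ => Finset.sum_le_sum fun a _ => ?_
    haveI := D.fdV i a
    haveI := D.fdW i a
    exact Nat.add_le_add (Submodule.finrank_mono (h.1 i a))
      (Nat.sub_le_sub_left (Submodule.finrank_mono (h.2 i a)) _)
  -- the set of measures of subreps above S is bounded and nonempty
  let s : Set ℕ := {n | ∃ T : TwistedSubrep D, S.Subord T ∧ m T = n}
  have hSS : S.Subord S := ⟨fun i a => le_rfl, fun i a => le_rfl⟩
  have hne : s.Nonempty := ⟨m S, S, hSS, rfl⟩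
  have hbdd : BddAbove s := by
    refine ⟨∑ i : Q₀, ∑ a : Fin N,
      (Module.finrank k (D.V i a) + Module.finrank k (D.W i a)), ?_⟩
    rintro n ⟨T, -, rfl⟩
    refine Finset.sum_le_sum fun i _ => Finset.sum_le_sum fun a _ => ?_
    haveI := D.fdV i a
    exact Nat.add_le_add (Submodule.finrank_le _) (Nat.sub_le _ _)
  obtain ⟨T, hST, hTm⟩ : ∃ T : TwistedSubrep D, S.Subord T ∧ m T = sSup s :=
    Nat.sSup_mem hne hbdd
  refine ⟨T, hST, ?_⟩
  intro U hTU i a _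
  have hSU : S.Subord U :=
    ⟨fun i a => le_trans (hST.1 i a) (hTU.1 i a),
     fun i a => le_trans (hTU.2 i a) (hST.2 i a)⟩
  have hUle : m U ≤ m T := by
    rw [hTm]; exact le_csSup hbdd ⟨U, hSU, rfl⟩
  have hTle : m T ≤ m U := hmono T U hTU
  have hmeq : m T = m U := le_antisymm hTle hUle
  -- each summand must be equal
  have hterm : ∀ i : Q₀, ∀ a : Fin N,
      (Module.finrank k (T.V' i a) +
        (Module.finrank k (D.W i a) - Module.finrank k (T.W' i a)))
      = (Module.finrank k (U.V' i a) +
        (Module.finrank k (D.W i a) - Module.finrank k (U.W' i a))) := by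
    have h1 : ∀ i ∈ (Finset.univ : Finset Q₀), ∀ a ∈ (Finset.univ : Finset (Fin N)),
        (Module.finrank k (T.V' i a) +
          (Module.finrank k (D.W i a) - Module.finrank k (T.W' i a)))
        ≤ (Module.finrank k (U.V' i a) +
          (Module.finrank k (D.W i a) - Module.finrank k (U.W' i a))) := by
      intro i _ a _
      haveI := D.fdV i a
      haveI := D.fdW i a
      exact Nat.add_le_add (Submodule.finrank_mono (hTU.1 i a))
        (Nat.sub_le_sub_left (Submodule.finrank_mono (hTU.2 i a)) _)
    have houter : ∀ i ∈ (Finset.univ : Finset Q₀),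
        (∑ a : Fin N, (Module.finrank k (T.V' i a) +
          (Module.finrank k (D.W i a) - Module.finrank k (T.W' i a))))
        = ∑ a : Fin N, (Module.finrank k (U.V' i a) +
          (Module.finrank k (D.W i a) - Module.finrank k (U.W' i a))) := by
      refine (Finset.sum_eq_sum_iff_of_le ?_).mp hmeq
      intro i _
      exact Finset.sum_le_sum (h1 i (Finset.mem_univ i))
    intro i a
    exact (Finset.sum_eq_sum_iff_of_le (h1 i (Finset.mem_univ i))).mp
      (houter i (Finset.mem_univ i)) a (Finset.mem_univ a)
  have := hterm i a
  haveI := D.fdV i a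
  haveI := D.fdW i a
  have hV : Module.finrank k (T.V' i a) = Module.finrank k (U.V' i a) := by
    have h2 : Module.finrank k (T.V' i a) ≤ Module.finrank k (U.V' i a) :=
      Submodule.finrank_mono (hTU.1 i a)
    have h3 : Module.finrank k (D.W i a) - Module.finrank k (U.W' i a)
        ≥ Module.finrank k (D.W i a) - Module.finrank k (T.W' i a) :=
      Nat.sub_le_sub_left (Submodule.finrank_mono (hTU.2 i a)) _
    omega
  have hW : Module.finrank k (T.W' i a) = Module.finrank k (U.W' i a) := by
    have h2 : Module.finrank k (T.V' i a) ≤ Module.finrank k (U.V' i a) :=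
      Submodule.finrank_mono (hTU.1 i a)
    have hle1 : Module.finrank k (T.W' i a) ≤ Module.finrank k (D.W i a) :=
      Submodule.finrank_le _
    have hle2 : Module.finrank k (U.W' i a) ≤ Module.finrank k (D.W i a) :=
      Submodule.finrank_le _
    omega
  exact ⟨Submodule.eq_of_le_of_finrank_eq (hTU.1 i a) hV,
    (Submodule.eq_of_le_of_finrank_eq (hTU.2 i a) hW.symm).symm⟩
end

section
/- Consider a datum of twisted-quiver representation type over a field k (vector spaces V_{ik}, W_{il}, H_{kl}, maps φ_{ikl}, A_{αk}, B_{αk} satisfying the relations B_{αl} ∘ φ_{ikl} = φ_{jkl} ∘ (A_{αk} ⊗ id)), let σ ∈ ℝ_{≥0}^{Q₀×{1,…,N}}, and let M′ be a subrepresentation. Define, for all i ∈ Q₀ and j ∈ {1,…,N}, W″_{ij} := Σ_{k=1}^N φ_{ikj}(V′_{ik} ⊗ H_{kj}) and V″_{ij} := { v ∈ V_{ij} : φ_{ijk}(v ⊗ h) ∈ W″_{ik} for all k ∈ {1,…,N} and all h ∈ H_{jk} }. Then the family (V″, W″) is a subrepresentation of the datum — in particular A_{αk}(V″_{ik}) ⊆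 V″_{jk} and B_{αk}(W″_{ik}) ⊆ W″_{jk} for every arrow α : i → j, which uses the relations B_{αl} ∘ φ_{ikl} = φ_{jkl} ∘ (A_{αk} ⊗ id) — and moreover M′ ⪯ M″ and M″ is tight. -/
open TensorProduct Module

variable {k : Type} [Field k] {Q₀ : Type} [Quiver.{1} Q₀] {N : ℕ}

/-- `W″_{ib} := ∑_{a} φ_{iab}(V′_{ia} ⊗ H_{ab})`. -/
noncomputable def tightW {D : TwistedDatum k Q₀ N} (S : TwistedSubrep D)
    (i : Q₀) (b : Fin N) : Submodule k (D.W i b) :=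
  ⨆ a : Fin N, Submodule.map (D.phi i a b)
    (Submodule.map₂ (TensorProduct.mk k (D.V i a) (D.H a b)) (S.V' i a) ⊤)

/-- `V″_{ia} := { v ∈ V_{ia} : φ_{iab}(v ⊗ h) ∈ W″_{ib} for all b and all h ∈ H_{ab} }`. -/
noncomputable def tightV {D : TwistedDatum k Q₀ N} (S : TwistedSubrep D)
    (i : Q₀) (a : Fin N) : Submodule k (D.V i a) :=
  ⨅ (b : Fin N) (h : D.H a b),
    Submodule.comap ((D.phi i a b).comp ((TensorProduct.mk k (D.V i a) (D.H a b)).flip h))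
      (tightW S i b)

lemma mem_tightV_iff {D : TwistedDatum k Q₀ N} (S : TwistedSubrep D)
    {i : Q₀} {a : Fin N} (v : D.V i a) :
    v ∈ tightV S i a ↔ ∀ (b : Fin N) (h : D.H a b), D.phi i a b (v ⊗ₜ[k] h) ∈ tightW S i b := by
  simp [tightV, Submodule.mem_iInf, Submodule.mem_comap]

lemma phi_mem_tightW {D : TwistedDatum k Q₀ N} (S : TwistedSubrep D)
    {i : Q₀} {a b : Fin N} {v : D.V i a} (hv : v ∈ S.V' i a) (h : D.H a b) :
    D.phi i a b (v ⊗ₜ[k] h) ∈ tightW S i b := by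
  refine Submodule.mem_iSup_of_mem a ?_
  exact Submodule.mem_map_of_mem (Submodule.apply_mem_map₂ _ hv Submodule.mem_top)

lemma tightW_le {D : TwistedDatum k Q₀ N} (S : TwistedSubrep D)
    {i : Q₀} {b : Fin N} {P : Submodule k (D.W i b)}
    (hP : ∀ (a : Fin N), ∀ v ∈ S.V' i a, ∀ h : D.H a b, D.phi i a b (v ⊗ₜ[k] h) ∈ P) :
    tightW S i b ≤ P := by
  refine iSup_le fun a => ?_
  rw [Submodule.map_le_iff_le_comap, Submodule.map₂_le]
  intro v hv h _
  exact hP a v hv h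

lemma tightW_le_comap_B {D : TwistedDatum k Q₀ N} (S : TwistedSubrep D)
    {i j : Q₀} (α : i ⟶ j) (b : Fin N) :
    tightW S i b ≤ Submodule.comap (D.B α b) (tightW S j b) := by
  refine tightW_le S fun a v hv h => ?_
  have hrel := LinearMap.congr_fun (D.rel α a b) (v ⊗ₜ[k] h)
  simp only [LinearMap.comp_apply, TensorProduct.map_tmul, LinearMap.id_apply] at hrel
  simp only [Submodule.mem_comap, hrel]
  exact phi_mem_tightW S (S.A_mem α a v hv) h

/-- The families `V″` and `W″` constructed from a subrepresentation `M′` form a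
subrepresentation `M″` (this uses the relations `B ∘ φ = φ ∘ (A ⊗ id)`), `M′` is subordinate
to `M″`, and `M″` is tight. -/
theorem tight_construction [Fintype Q₀] [∀ i j : Q₀, Fintype (i ⟶ j)]
    (D : TwistedDatum k Q₀ N) (σ : Q₀ → Fin N → ℝ) (hσ : ∀ i a, 0 ≤ σ i a)
    (S : TwistedSubrep D) :
    ∃ T : TwistedSubrep D,
      (∀ i a, T.V' i a = tightV S i a) ∧ (∀ i b, T.W' i b = tightW S i b) ∧
      S.Subord T ∧ T.Tight σ := by
  refine ⟨⟨tightV S, tightW S, ?_, ?_, ?_⟩, fun i a => rfl, fun i b => rfl, ?_, ?_⟩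
  · intro i a b v hv h
    exact (mem_tightV_iff S v).1 hv b h
  · intro i j α a v hv
    rw [mem_tightV_iff] at hv ⊢
    intro b h
    have hrel := LinearMap.congr_fun (D.rel α a b) (v ⊗ₜ[k] h)
    simp only [LinearMap.comp_apply, TensorProduct.map_tmul, LinearMap.id_apply] at hrel
    rw [← hrel]
    exact tightW_le_comap_B S α b (hv b h)
  · intro i j α b w hw
    exact tightW_le_comap_B S α b hw
  · constructor
    · intro i a v hv
      rw [mem_tightV_iff]
      intro b h
      exact phi_mem_tightW S hv h
    · intro i b
      exact tightW_le S fun a v hv h => S.phi_mem i a b v hv h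
  · intro U ⟨hV, hW⟩ i a _
    have hWeq : ∀ i b, tightW S i b = U.W' i b := by
      intro i b
      refine le_antisymm (tightW_le S fun a v hv h => ?_) (hW i b)
      exact U.phi_mem i a b v (hV i a ((mem_tightV_iff S v).2
        fun b h => phi_mem_tightW S hv h)) h
    refine ⟨le_antisymm (hV i a) ?_, hWeq i a⟩
    intro v hv
    rw [mem_tightV_iff]
    intro b h
    rw [hWeq i b]
    exact U.phi_mem i a b v hv h
end

section
/- Consider a datum of twisted-quiver representation type over a field k (vector spaces V_{ik}, W_{il}, H_{kl}, maps φ_{ikl}, A_{αk}, B_{αk} satisfying the relations B_{αl} ∘ φ_{ikl} = φ_{jkl} ∘ (A_{αk} ⊗ id)). Suppose the datum is generically injective, and let σ ∈ ℝ_{≥0}^{Q₀×{1,…,N}} be such that for every i ∈ Q₀ there exists j with σ_{ij} ≠ 0; assume S₁ := Σ_{i,j} σ_{ij} dim V_{ij} > 0 and S₂ := Σ_{i,j} σ_{ij} dim W_{ij} > 0. Define θ(M′) := Σ_{i,j} σ_{ij} (dim V′_{ij})/S₁ − Σ_{i,j} σ_{ij} (dim W′_{ij})/S₂ for subrepresentations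 M′, and call the datum θ-semistable if θ(M′) ≤ 0 for every subrepresentation M′. Then the datum is θ-semistable if and only if (Σ_{i,j} σ_{ij} dim V′_{ij})/(Σ_{i,j} σ_{ij} dim W′_{ij}) ≤ S₁/S₂ for every tight non-degenerate subrepresentation M′. -/
open TensorProduct Module

variable {k : Type} [Field k] {Q₀ : Type} [Quiver.{1} Q₀] {N : ℕ}

section Aux

variable {k : Type} [Field k] {Q₀ : Type} [Quiver.{1} Q₀] {N : ℕ}

lemma TwistedSubrep.Subord.trans {D : TwistedDatum k Q₀ N} {S T U : TwistedSubrep D}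
    (h1 : S.Subord T) (h2 : T.Subord U) : S.Subord U :=
  ⟨fun i a => (h1.1 i a).trans (h2.1 i a), fun i a => (h2.2 i a).trans (h1.2 i a)⟩

/-- measure counting total `V'`-dimension plus total `W'`-codimension -/
noncomputable def Fmeas {D : TwistedDatum k Q₀ N} [Fintype Q₀] (U : TwistedSubrep D) : ℕ :=
  (∑ i : Q₀, ∑ a : Fin N, finrank k (U.V' i a))
    + ∑ i : Q₀, ∑ a : Fin N, (finrank k (D.W i a) - finrank k (U.W' i a))

lemma exists_tight_above [Fintype Q₀] (D : TwistedDatum k Q₀ N) (S : TwistedSubrep D) :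
    ∃ T : TwistedSubrep D, S.Subord T ∧
      ∀ U : TwistedSubrep D, T.Subord U → ∀ i a, T.V' i a = U.V' i a ∧ T.W' i a = U.W' i a := by
  haveI : ∀ i a, FiniteDimensional k (D.V i a) := D.fdV
  haveI : ∀ i a, FiniteDimensional k (D.W i a) := D.fdW
  have hmono : ∀ {T U : TwistedSubrep D}, T.Subord U → Fmeas T ≤ Fmeas U := by
    intro T U h
    refine add_le_add ?_ ?_
    · exact Finset.sum_le_sum fun i _ => Finset.sum_le_sum fun a _ =>
        Submodule.finrank_mono (h.1 i a)
    · exact Finset.sum_le_sum fun i _ => Finset.sum_le_sum fun a _ =>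
        Nat.sub_le_sub_left (Submodule.finrank_mono (h.2 i a)) _
  set 𝒮 : Set ℕ := {n | ∃ U : TwistedSubrep D, S.Subord U ∧ Fmeas U = n} with h𝒮
  have hne : 𝒮.Nonempty := ⟨Fmeas S, S, ⟨fun i a => le_rfl, fun i a => le_rfl⟩, rfl⟩
  have hbdd : BddAbove 𝒮 := by
    refine ⟨(∑ i : Q₀, ∑ a : Fin N, finrank k (D.V i a))
      + ∑ i : Q₀, ∑ a : Fin N, finrank k (D.W i a), ?_⟩
    rintro n ⟨U, _, rfl⟩
    exact add_le_add
      (Finset.sum_le_sum fun i _ => Finset.sum_le_sum fun a _ => Submodule.finrank_le _)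
      (Finset.sum_le_sum fun i _ => Finset.sum_le_sum fun a _ => Nat.sub_le _ _)
  obtain ⟨T, hST, hTmax⟩ : sSup 𝒮 ∈ 𝒮 := Nat.sSup_mem hne hbdd
  refine ⟨T, hST, fun U hTU i a => ?_⟩
  have hSU : S.Subord U := hST.trans hTU
  have hUmem : Fmeas U ∈ 𝒮 := ⟨U, hSU, rfl⟩
  have hFeq : Fmeas T = Fmeas U :=
    le_antisymm (hmono hTU) (hTmax ▸ le_csSup hbdd hUmem)
  have hVle : ∀ i a, finrank k (T.V' i a) ≤ finrank k (U.V' i a) :=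
    fun i a => Submodule.finrank_mono (hTU.1 i a)
  have hWle : ∀ i a, (finrank k (D.W i a) - finrank k (T.W' i a))
      ≤ (finrank k (D.W i a) - finrank k (U.W' i a)) :=
    fun i a => Nat.sub_le_sub_left (Submodule.finrank_mono (hTU.2 i a)) _
  have hA : (∑ i : Q₀, ∑ a : Fin N, finrank k (T.V' i a))
      ≤ ∑ i : Q₀, ∑ a : Fin N, finrank k (U.V' i a) :=
    Finset.sum_le_sum fun i _ => Finset.sum_le_sum fun a _ => hVle i a
  have hB : (∑ i : Q₀, ∑ a : Fin N, (finrank k (D.W i a) - finrank k (T.W' i a)))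
      ≤ ∑ i : Q₀, ∑ a : Fin N, (finrank k (D.W i a) - finrank k (U.W' i a)) :=
    Finset.sum_le_sum fun i _ => Finset.sum_le_sum fun a _ => hWle i a
  have hAeq : (∑ i : Q₀, ∑ a : Fin N, finrank k (T.V' i a))
      = ∑ i : Q₀, ∑ a : Fin N, finrank k (U.V' i a) := by
    unfold Fmeas at hFeq; omega
  have hBeq : (∑ i : Q₀, ∑ a : Fin N, (finrank k (D.W i a) - finrank k (T.W' i a)))
      = ∑ i : Q₀, ∑ a : Fin N, (finrank k (D.W i a) - finrank k (U.W' i a)) := by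
    unfold Fmeas at hFeq; omega
  have hAi := (Finset.sum_eq_sum_iff_of_le
    (fun i _ => Finset.sum_le_sum fun a _ => hVle i a)).1 hAeq i (Finset.mem_univ i)
  have hAia := (Finset.sum_eq_sum_iff_of_le
    (fun a _ => hVle i a)).1 hAi a (Finset.mem_univ a)
  have hBi := (Finset.sum_eq_sum_iff_of_le
    (fun i _ => Finset.sum_le_sum fun a _ => hWle i a)).1 hBeq i (Finset.mem_univ i)
  have hBia := (Finset.sum_eq_sum_iff_of_le
    (fun a _ => hWle i a)).1 hBi a (Finset.mem_univ a)
  constructor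
  · exact Submodule.eq_of_le_of_finrank_eq (hTU.1 i a) hAia
  · have h1 : finrank k (T.W' i a) ≤ finrank k (D.W i a) := Submodule.finrank_le _
    have h2 : finrank k (U.W' i a) ≤ finrank k (D.W i a) := Submodule.finrank_le _
    have : finrank k (U.W' i a) = finrank k (T.W' i a) := by omega
    exact (Submodule.eq_of_le_of_finrank_eq (hTU.2 i a) this).symm

end Aux

/-- Semistability criterion via tight non-degenerate subrepresentations: a generically
injective twisted datum with `σ ≥ 0` nonzero at each vertex and
`S₁ = ∑ σ_{ia} dim V_{ia} > 0`, `S₂ = ∑ σ_{ia} dim W_{ia} > 0` is `θ`-semistable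
(i.e. `θ(M′) = ∑ σ dim V′/S₁ − ∑ σ dim W′/S₂ ≤ 0` for every subrepresentation `M′`) if and
only if `(∑ σ dim V′)/(∑ σ dim W′) ≤ S₁/S₂` for every tight non-degenerate
subrepresentation `M′`. -/


theorem semistable_iff_tight_nondegenerate [Fintype Q₀]
    [∀ i j : Q₀, Fintype (i ⟶ j)]
    (D : TwistedDatum k Q₀ N) (hD : D.GenInjective)
    (σ : Q₀ → Fin N → ℝ) (hσ : ∀ i a, 0 ≤ σ i a) (hσv : ∀ i : Q₀, ∃ a, σ i a ≠ 0)
    (S₁ S₂ : ℝ)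
    (hS₁ : S₁ = ∑ i : Q₀, ∑ a : Fin N, σ i a * (finrank k (D.V i a) : ℝ)) (hS₁pos : 0 < S₁)
    (hS₂ : S₂ = ∑ i : Q₀, ∑ a : Fin N, σ i a * (finrank k (D.W i a) : ℝ)) (hS₂pos : 0 < S₂) :
    (∀ S : TwistedSubrep D,
        (∑ i : Q₀, ∑ a : Fin N, σ i a * (finrank k (S.V' i a) : ℝ)) / S₁
          - (∑ i : Q₀, ∑ a : Fin N, σ i a * (finrank k (S.W' i a) : ℝ)) / S₂ ≤ 0)
      ↔ (∀ S : TwistedSubrep D, S.Tight σ → ¬ S.Degenerate σ →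
          (∑ i : Q₀, ∑ a : Fin N, σ i a * (finrank k (S.V' i a) : ℝ))
            / (∑ i : Q₀, ∑ a : Fin N, σ i a * (finrank k (S.W' i a) : ℝ)) ≤ S₁ / S₂) := by
  haveI : ∀ i a, FiniteDimensional k (D.V i a) := D.fdV
  haveI : ∀ i a, FiniteDimensional k (D.W i a) := D.fdW
  have sumV_nonneg : ∀ S : TwistedSubrep D,
      0 ≤ ∑ i : Q₀, ∑ a : Fin N, σ i a * (finrank k (S.V' i a) : ℝ) :=
    fun S => Finset.sum_nonneg fun i _ => Finset.sum_nonneg fun a _ =>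
      mul_nonneg (hσ i a) (Nat.cast_nonneg _)
  have sumW_nonneg : ∀ S : TwistedSubrep D,
      0 ≤ ∑ i : Q₀, ∑ a : Fin N, σ i a * (finrank k (S.W' i a) : ℝ) :=
    fun S => Finset.sum_nonneg fun i _ => Finset.sum_nonneg fun a _ =>
      mul_nonneg (hσ i a) (Nat.cast_nonneg _)
  constructor
  · -- semistable → tight non-degenerate criterion
    intro hss S _ _
    set vS := ∑ i : Q₀, ∑ a : Fin N, σ i a * (finrank k (S.V' i a) : ℝ) with hvS
    set wS := ∑ i : Q₀, ∑ a : Fin N, σ i a * (finrank k (S.W' i a) : ℝ) with hwS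
    rcases eq_or_lt_of_le (sumW_nonneg S) with hw0 | hwpos
    · have hz : wS = 0 := hwS.trans hw0.symm
      rw [hz, div_zero]
      positivity
    · have h1 : vS / S₁ ≤ wS / S₂ := by have := hss S; linarith
      rw [div_le_div_iff₀ hS₁pos hS₂pos] at h1
      rw [div_le_div_iff₀ hwpos hS₂pos]
      nlinarith
  · -- tight non-degenerate criterion → semistable
    intro h S
    obtain ⟨T, hST, hTeq⟩ := exists_tight_above D S
    have hVle : (∑ i : Q₀, ∑ a : Fin N, σ i a * (finrank k (S.V' i a) : ℝ))
        ≤ ∑ i : Q₀, ∑ a : Fin N, σ i a * (finrank k (T.V' i a) : ℝ) :=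
      Finset.sum_le_sum fun i _ => Finset.sum_le_sum fun a _ =>
        mul_le_mul_of_nonneg_left
          (Nat.cast_le.2 (Submodule.finrank_mono (hST.1 i a))) (hσ i a)
    have hWle : (∑ i : Q₀, ∑ a : Fin N, σ i a * (finrank k (T.W' i a) : ℝ))
        ≤ ∑ i : Q₀, ∑ a : Fin N, σ i a * (finrank k (S.W' i a) : ℝ) :=
      Finset.sum_le_sum fun i _ => Finset.sum_le_sum fun a _ =>
        mul_le_mul_of_nonneg_left
          (Nat.cast_le.2 (Submodule.finrank_mono (hST.2 i a))) (hσ i a)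
    set vT := ∑ i : Q₀, ∑ a : Fin N, σ i a * (finrank k (T.V' i a) : ℝ) with hvT
    set wT := ∑ i : Q₀, ∑ a : Fin N, σ i a * (finrank k (T.W' i a) : ℝ) with hwT
    -- it suffices to show θ(T) ≤ 0
    have main : vT / S₁ - wT / S₂ ≤ 0 := by
      by_cases hdeg : T.Degenerate σ
      · have hv0 : vT = 0 := by
          rw [hvT]
          refine Finset.sum_eq_zero fun i _ => Finset.sum_eq_zero fun a _ => ?_
          rw [hdeg.1 i a, finrank_bot]
          simp
        have hw0 : wT = 0 := by
          rw [hwT]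
          refine Finset.sum_eq_zero fun i _ => Finset.sum_eq_zero fun a _ => ?_
          by_cases hs : σ i a = 0
          · rw [hs]; ring
          · rw [hdeg.2 i a hs, finrank_bot]; simp
        rw [hv0, hw0]; simp
      · have hTight : T.Tight σ := fun U hTU i a _ => hTeq U hTU i a
        have key := h T hTight hdeg
        -- wT > 0
        have hex : ∃ i b, σ i b ≠ 0 ∧ T.W' i b ≠ ⊥ := by
          rw [TwistedSubrep.Degenerate, not_and_or] at hdeg
          push_neg at hdeg
          rcases hdeg with ⟨i, a, hVa⟩ | ⟨i, b, hb, hWb⟩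
          · obtain ⟨v, hv, hv0⟩ := (Submodule.ne_bot_iff _).1 hVa
            obtain ⟨b, hb⟩ := hσv i
            obtain ⟨hh, hph⟩ := hD i a b v hv0
            refine ⟨i, b, hb, (Submodule.ne_bot_iff _).2
              ⟨D.phi i a b (v ⊗ₜ[k] hh), T.phi_mem i a b v hv hh, hph⟩⟩
          · exact ⟨i, b, hb, hWb⟩
        obtain ⟨i₀, b₀, hs₀, hW₀⟩ := hex
        have hwpos : 0 < wT := by
          rw [hwT]
          refine Finset.sum_pos' (fun i _ => Finset.sum_nonneg fun a _ =>
            mul_nonneg (hσ i a) (Nat.cast_nonneg _)) ⟨i₀, Finset.mem_univ i₀, ?_⟩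
          refine Finset.sum_pos' (fun a _ => mul_nonneg (hσ i₀ a) (Nat.cast_nonneg _))
            ⟨b₀, Finset.mem_univ b₀, ?_⟩
          have h1 : 0 < σ i₀ b₀ := lt_of_le_of_ne (hσ i₀ b₀) (Ne.symm hs₀)
          have h2 : 0 < finrank k (T.W' i₀ b₀) := by
            rw [Module.finrank_pos_iff]
            exact (Submodule.nontrivial_iff_ne_bot).2 hW₀
          have h3 : (0 : ℝ) < (finrank k (T.W' i₀ b₀) : ℝ) := by exact_mod_cast h2
          positivity
        rw [div_le_div_iff₀ hwpos hS₂pos] at key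
        rw [sub_nonpos, div_le_div_iff₀ hS₁pos hS₂pos]
        nlinarith
    rw [sub_nonpos] at main ⊢
    rw [div_le_div_iff₀ hS₁pos hS₂pos] at main ⊢
    nlinarith [sumV_nonneg S, sumW_nonneg T]
end

section
/- Let ι be a finite index set, σ : ι → ℚ with σ_i ≥ 0 for all i, and let r and M be positive integers. Let S ⊆ ℝ be the set of all real numbers of the form (Σ_{i ∈ ι} σ_i · (k_i / r!)) / (Σ_{i ∈ ι} σ_i · m_i), where k : ι → ℤ is arbitrary and m : ι → ℤ satisfies 1 ≤ m_i ≤ M for all i and Σ_{i ∈ ι} σ_i m_i ≠ 0. Then S is a discrete subset of ℝ; in particular, S ∩ B is finite for every bounded subset B ⊆ ℝ. -/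
/-!
Clearing denominators, `σ = a / c` with `a : ι → ℤ`, turns each value into `P / (r! Q)` with
`P = ∑ aᵢ kᵢ` and `Q = ∑ aᵢ mᵢ` integers. Since `mᵢ ∈ [1, M]`, the nonzero integer `Q` satisfies
`|Q| ≤ A := M ∑ |aᵢ|`, so `Q ∣ A!` and every value lies in the lattice `(r! A!)⁻¹ ℤ`, which is a
closed discrete subset of `ℝ`.
-/

open Bornology Nat

lemma discreteTopology_and_finite_inter_of_subset {α : Type*} [PseudoMetricSpace α]
    [ProperSpace α] {S T : Set α} (hT : IsDiscrete T) (hTc : IsClosed T) (hST : S ⊆ T) :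
    DiscreteTopology S ∧ ∀ B : Set α, IsBounded B → (S ∩ B).Finite :=
  ⟨(hT.mono hST).to_subtype, fun _ hB =>
    (Metric.finite_isBounded_inter_isClosed hT hB hTc).subset fun _ ⟨hS, hB'⟩ => ⟨hB', hST hS⟩⟩

lemma Rat.exists_int_eq_mul_of_finite {ι : Type*} [Finite ι] (σ : ι → ℚ) :
    ∃ (c : ℤ) (a : ι → ℤ), c ≠ 0 ∧ ∀ i, (a i : ℚ) = c * σ i := by
  obtain ⟨⟨c, hc⟩, h⟩ :=
    IsLocalization.exist_integer_multiples_of_finite (nonZeroDivisors ℤ) (S := ℚ) σ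
  choose a ha using h
  exact ⟨c, a, nonZeroDivisors.ne_zero hc, fun i => by simpa using ha i⟩

lemma Int.natAbs_sum_mul_le {ι : Type*} (s : Finset ι) (a m : ι → ℤ) {M : ℕ}
    (hm : ∀ i ∈ s, (m i).natAbs ≤ M) :
    (∑ i ∈ s, a i * m i).natAbs ≤ (∑ i ∈ s, (a i).natAbs) * M :=
  calc (∑ i ∈ s, a i * m i).natAbs ≤ ∑ i ∈ s, (a i).natAbs * (m i).natAbs := by
        simpa only [Int.natAbs_mul] using Int.natAbs_sum_le s fun i => a i * m i
    _ ≤ (∑ i ∈ s, (a i).natAbs) * M := by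
        rw [Finset.sum_mul]
        exact Finset.sum_le_sum fun i hi => Nat.mul_le_mul_left _ (hm i hi)

lemma exists_int_div_eq_div_factorial {K : Type*} [Field K] [CharZero K] (P : ℤ) {Q : ℤ}
    {A : ℕ} (hQ : Q ≠ 0) (hQA : Q.natAbs ≤ A) : ∃ n : ℤ, (P : K) / Q = n / (A ! : K) := by
  obtain ⟨s, hs⟩ : Q ∣ (A ! : ℤ) :=
    Int.natAbs_dvd.mp (Int.ofNat_dvd.mpr (Nat.dvd_factorial (Int.natAbs_pos.mpr hQ) hQA))
  have hs : (A ! : K) = Q * s := by exact_mod_cast hs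
  have hs0 : (s : K) ≠ 0 := by
    refine right_ne_zero_of_mul (a := (Q : K)) ?_
    rw [← hs]
    exact_mod_cast A.factorial_ne_zero
  refine ⟨P * s, ?_⟩
  rw [hs]
  push_cast
  rw [mul_div_mul_right _ _ hs0]

lemma sum_mul_div_div_sum_mul {ι K : Type*} [Field K] (s : Finset ι) (σ f g : ι → K)
    {c : K} (hc : c ≠ 0) (d : K) :
    (∑ i ∈ s, σ i * (f i / d)) / ∑ i ∈ s, σ i * g i
      = (∑ i ∈ s, c * σ i * f i) / (∑ i ∈ s, c * σ i * g i) / d := by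
  simp only [mul_assoc, ← Finset.mul_sum, mul_div_mul_left _ _ hc, ← mul_div_assoc,
    ← Finset.sum_div, div_right_comm]

theorem discrete_beta_values_general (ι : Type*) [Fintype ι] (σ : ι → ℚ)
    (r M : ℕ) (S : Set ℝ)
    (hS : S = {x : ℝ | ∃ (kk : ι → ℤ) (m : ι → ℤ),
      (∀ i, 1 ≤ m i ∧ m i ≤ (M : ℤ)) ∧ (∑ i, (σ i : ℝ) * (m i : ℝ)) ≠ 0 ∧
      x = (∑ i, (σ i : ℝ) * ((kk i : ℝ) / (Nat.factorial r : ℝ)))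
            / (∑ i, (σ i : ℝ) * (m i : ℝ))}) :
    DiscreteTopology S ∧ ∀ B : Set ℝ, Bornology.IsBounded B → (S ∩ B).Finite := by
  obtain ⟨c, a, hc, ha⟩ := Rat.exists_int_eq_mul_of_finite σ
  replace ha : ∀ i, (a i : ℝ) = c * σ i := fun i => by
    exact_mod_cast congrArg (Rat.cast : ℚ → ℝ) (ha i)
  set A := (∑ i, (a i).natAbs) * M
  subst hS
  refine discreteTopology_and_finite_inter_of_subset
    (SetLike.isDiscrete_iff_discreteTopology.mpr inferInstance)
    (AddSubgroup.zmultiples ((r ! * A ! : ℕ) : ℝ)⁻¹).isClosed_of_discrete ?_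
  rintro _ ⟨k, m, hm, hden, rfl⟩
  have hQ : ((∑ i, a i * m i : ℤ) : ℝ) = c * ∑ i, (σ i : ℝ) * m i := by
    push_cast
    simp only [ha, Finset.mul_sum, mul_assoc]
  obtain ⟨n, hn⟩ := exists_int_div_eq_div_factorial (K := ℝ) (∑ i, a i * k i)
    (Q := ∑ i, a i * m i) (by exact_mod_cast hQ ▸ mul_ne_zero (by exact_mod_cast hc) hden)
    (Int.natAbs_sum_mul_le (M := M) _ _ _ fun i _ => by have := hm i; omega)
  refine AddSubgroup.mem_zmultiples_iff.mpr ⟨n, ?_⟩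
  rw [sum_mul_div_div_sum_mul _ _ _ _ (Int.cast_ne_zero.mpr hc)]
  simp only [← ha]
  push_cast at hn ⊢
  rw [hn, zsmul_eq_mul, div_div, mul_comm (A ! : ℝ), div_eq_mul_inv]

/-- Discreteness lemma for rational stability parameters: the set of real numbers of the form
`(∑ᵢ σᵢ · (kᵢ / r!)) / (∑ᵢ σᵢ · mᵢ)`, where `σ : ι → ℚ` is a fixed nonnegative rational
weight, `k : ι → ℤ` is arbitrary and `m : ι → ℤ` satisfies `1 ≤ mᵢ ≤ M` with
`∑ᵢ σᵢ mᵢ ≠ 0`, is a discrete subset of `ℝ`; in particular its intersection with any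
bounded subset of `ℝ` is finite. -/
theorem discrete_beta_values (ι : Type*) [Fintype ι] (σ : ι → ℚ) (hσ : ∀ i, 0 ≤ σ i)
    (r M : ℕ) (hr : 0 < r) (hM : 0 < M) (S : Set ℝ)
    (hS : S = {x : ℝ | ∃ (kk : ι → ℤ) (m : ι → ℤ),
      (∀ i, 1 ≤ m i ∧ m i ≤ (M : ℤ)) ∧ (∑ i, (σ i : ℝ) * (m i : ℝ)) ≠ 0 ∧
      x = (∑ i, (σ i : ℝ) * ((kk i : ℝ) / (Nat.factorial r : ℝ)))
            / (∑ i, (σ i : ℝ) * (m i : ℝ))}) :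
    DiscreteTopology S ∧ ∀ B : Set ℝ, Bornology.IsBounded B → (S ∩ B).Finite :=
  discrete_beta_values_general ι σ r M S hS
end
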